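/- Let A be a standard bigraded Noetherian algebra over an Artinian local ring and M a finitely generated bigraded A-module that is relevant (some irredundant primary decomposition of 0 in M has a component whose associated prime is relevant, i.e., does not contain A_+). Then there exists a filtration 0 = M_0 ⊂ M_1 ⊂ ... ⊂ M_n = M by bigraded submodules with each M_i/M_{i-1} ≅ A/p_i for bihomogeneous primes p_i, such that p_1 is relevant, and moreover each M_i is relevant. -/

import Mathlib

set_option synthInstance.maxHeartbeats 400000
set_option maxHeartbeats 1000000
set_option linter.unusedSectionVars false
/-- The relevant ideal `A₊ = (x₁,…,xₙ) ∩ (y₁,…,yₘ)` of a bigraded algebra: the intersection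
of the ideal generated by the degree-`(1,0)` part and the ideal generated by the
degree-`(0,1)` part. -/
noncomputable def biPlus {A₀ A : Type} [CommRing A₀] [CommRing A] [Algebra A₀ A]
    (𝒜 : ℕ × ℕ → Submodule A₀ A) : Ideal A :=
  Ideal.span (𝒜 (1, 0) : Set A) ⊓ Ideal.span (𝒜 (0, 1) : Set A)

/-- The saturation `(J : A₊^∞) = ⋃ₖ (J : A₊ᵏ)`. -/
noncomputable def satPlus {A₀ A : Type} [CommRing A₀] [CommRing A] [Algebra A₀ A]
    (𝒜 : ℕ × ℕ → Submodule A₀ A) (J : Ideal A) : Ideal A :=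
  ⨆ k : ℕ, Submodule.colon J ((biPlus 𝒜 ^ k : Ideal A) : Submodule A A)

/-- The relevant dimension `rd M = dim A/((Ann M) : A₊^∞)` of an `A`-module `M`. -/
noncomputable def relDim {A₀ A : Type} [CommRing A₀] [CommRing A] [Algebra A₀ A]
    (𝒜 : ℕ × ℕ → Submodule A₀ A) (M : Type) [AddCommGroup M] [Module A M] :
    WithBot ℕ∞ :=
  ringKrullDim (A ⧸ satPlus 𝒜 (Module.annihilator A M))

/-- A finitely generated bigraded module `M` is *relevant* if some irredundant primary
decomposition `0 = ⋂ᵢ Mᵢ` of the zero submodule, with `Ass (M/Mᵢ) = {pᵢ}`, has at least one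
component whose (bihomogeneous) prime `pᵢ` is relevant, i.e. does not contain `A₊`. -/
noncomputable def IsRelevantModule {A₀ A : Type} [CommRing A₀] [CommRing A] [Algebra A₀ A]
    (𝒜 : ℕ × ℕ → Submodule A₀ A) [GradedAlgebra 𝒜] (M : Type) [AddCommGroup M]
    [Module A M] : Prop :=
  ∃ (s : Finset (Submodule A M)) (P : Submodule A M → Ideal A),
    sInf (s : Set (Submodule A M)) = ⊥ ∧
    (∀ N ∈ s, associatedPrimes A (M ⧸ N) = {P N}) ∧
    (∀ N ∈ s, sInf ((s : Set (Submodule A M)) \ {N}) ≠ ⊥) ∧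
    (∃ N ∈ s, (P N).IsHomogeneous 𝒜 ∧ ¬ biPlus 𝒜 ≤ P N)

open DirectSum Submodule LinearMap

section RMFPlain
variable {A : Type} [CommRing A] {M : Type} [AddCommGroup M] [Module A M]

/-- The quotient of `F ⊔ A∙x` by `F` is `A ⧸ (F : x)`. -/
theorem quot_sup_span_equiv (F : Submodule A M) (x : M) :
    Nonempty ((↥(F ⊔ Submodule.span A {x}) ⧸
        Submodule.comap (F ⊔ Submodule.span A {x}).subtype F) ≃ₗ[A]
      A ⧸ Submodule.comap (LinearMap.toSpanSingleton A M x) F) := by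
  set F' := F ⊔ Submodule.span A {x} with hF'
  have hxF' : x ∈ F' := Submodule.mem_sup_right (Submodule.mem_span_singleton_self x)
  set ψ : M →ₗ[A] M := LinearMap.id
  set φ : A →ₗ[A] (↥F' ⧸ Submodule.comap F'.subtype F) :=
    (Submodule.comap F'.subtype F).mkQ ∘ₗ (LinearMap.toSpanSingleton A ↥F' ⟨x, hxF'⟩) with hφ
  have hφa : ∀ a : A, φ a = Submodule.Quotient.mk (⟨a • x, F'.smul_mem a hxF'⟩ : ↥F') := by
    intro a
    simp only [hφ, LinearMap.comp_apply, LinearMap.toSpanSingleton_apply, Submodule.mkQ_apply]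
    rfl
  have hker : LinearMap.ker φ = Submodule.comap (LinearMap.toSpanSingleton A M x) F := by
    ext a
    rw [LinearMap.mem_ker, hφa, Submodule.Quotient.mk_eq_zero, Submodule.mem_comap,
      Submodule.mem_comap, LinearMap.toSpanSingleton_apply]
    rfl
  have hsurj : Function.Surjective φ := by
    intro y
    obtain ⟨z, rfl⟩ := Submodule.Quotient.mk_surjective _ y
    obtain ⟨f, hf, w, hw, hfw⟩ := Submodule.mem_sup.mp z.2
    obtain ⟨a, rfl⟩ := Submodule.mem_span_singleton.mp hw
    refine ⟨a, ?_⟩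
    rw [hφa, Submodule.Quotient.eq]
    refine Submodule.mem_comap.mpr ?_
    have : ((⟨a • x, F'.smul_mem a hxF'⟩ : ↥F') - z : ↥F') = (⟨a • x - z, _⟩ : ↥F') := rfl
    show ((⟨a • x, F'.smul_mem a hxF'⟩ : ↥F') - z : M) ∈ F
    have : ((⟨a • x, F'.smul_mem a hxF'⟩ : ↥F') - z : M) = a • x - z := rfl
    rw [this, ← hfw]
    simpa using hf
  exact ⟨((Submodule.quotEquivOfEq _ _ hker.symm).trans
    (φ.quotKerEquivOfSurjective hsurj)).symm⟩

lemma ann_smul_of_prime {q : Ideal A} (hq : q.IsPrime) {x : M}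
    (hx : ∀ a, a • x = 0 ↔ a ∈ q) {b : A} (hb : b ∉ q) (a : A) :
    a • (b • x) = 0 ↔ a ∈ q := by
  rw [smul_smul, hx]
  exact ⟨fun h => (hq.mem_or_mem h).resolve_right hb, fun h => q.mul_mem_right b h⟩

/-- If `sInf t ⊓ A∙x = ⊥` with `Ann x = q` prime, then `q` is associated to some `M ⧸ N`,
`N ∈ t`. -/
lemma assoc_of_sInf_inf_span {q : Ideal A} (hq : q.IsPrime)
    (t : Finset (Submodule A M)) (x : M) (hx0 : x ≠ 0) (hx : ∀ a, a • x = 0 ↔ a ∈ q) :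
    sInf (↑t : Set (Submodule A M)) ⊓ Submodule.span A {x} = ⊥ →
      ∃ N ∈ t, IsAssociatedPrime q (M ⧸ N) := by
  classical
  induction t using Finset.induction with
  | empty =>
    intro h
    rw [Finset.coe_empty, sInf_empty, top_inf_eq] at h
    exact absurd (h ▸ Submodule.mem_span_singleton_self x) (by simp [hx0])
  | @insert N u hN ih =>
    intro h
    rw [Finset.coe_insert, sInf_insert] at h
    by_cases hc : sInf (↑u : Set (Submodule A M)) ⊓ Submodule.span A {x} = ⊥
    · obtain ⟨N', hN', h'⟩ := ih hc
      exact ⟨N', Finset.mem_insert_of_mem hN', h'⟩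
    · obtain ⟨y, hyK, hy0⟩ := Submodule.ne_bot_iff _ |>.mp hc
      obtain ⟨hy1, hy2⟩ := Submodule.mem_inf.mp hyK
      obtain ⟨b, rfl⟩ := Submodule.mem_span_singleton.mp hy2
      have hb : b ∉ q := fun hbq => hy0 ((hx b).mpr hbq)
      have hanny : ∀ a, a • (b • x) = 0 ↔ a ∈ q := ann_smul_of_prime hq hx hb
      refine ⟨N, Finset.mem_insert_self _ _, hq, Submodule.Quotient.mk (b • x), ?_⟩
      suffices hcol : q = (⊥ : Submodule A (M ⧸ N)).colon {Submodule.Quotient.mk (b • x)} by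
        rw [← hcol, hq.radical]
      ext a
      rw [Submodule.mem_colon_singleton, Submodule.mem_bot, ← Submodule.Quotient.mk_smul,
        Submodule.Quotient.mk_eq_zero]
      constructor
      · intro haq
        rw [← hanny a] at haq
        rw [haq]
        exact N.zero_mem
      · intro haN
        rw [← hanny a]
        have h1 : a • (b • x) ∈ sInf (↑u : Set (Submodule A M)) ⊓ Submodule.span A {x} :=
          Submodule.smul_mem _ a hyK
        have h2 : a • (b • x) ∈ N ⊓ (sInf (↑u : Set (Submodule A M)) ⊓ Submodule.span A {x}) :=
          Submodule.mem_inf.mpr ⟨haN, h1⟩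
        rw [← inf_assoc] at h2
        rw [h] at h2
        simpa using h2
        

lemma singleton_ass_of_infIrred [IsNoetherianRing A] {N : Submodule A M}
    (h : InfIrred N) : ∃ p, associatedPrimes A (M ⧸ N) = {p} := by
  have hN : N ≠ ⊤ := h.ne_top
  haveI := Submodule.Quotient.nontrivial_iff.mpr hN
  obtain ⟨p, hp⟩ := associatedPrimes.nonempty A (M ⧸ N)
  refine ⟨p, Set.eq_singleton_iff_unique_mem.mpr ⟨hp, ?_⟩⟩
  rintro q hq
  by_contra hne
  obtain ⟨hp', xp, hxp⟩ := (isAssociatedPrime_iff).mp hp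
  obtain ⟨hq', xq, hxq⟩ := (isAssociatedPrime_iff).mp hq
  have hxp0 : xp ≠ 0 := by
    rintro rfl
    exact hp'.ne_top (by rw [hxp, Submodule.colon_singleton_zero])
  have hxq0 : xq ≠ 0 := by
    rintro rfl
    exact hq'.ne_top (by rw [hxq, Submodule.colon_singleton_zero])
  have hannp : ∀ a : A, a • xp = 0 ↔ a ∈ p := fun a => by
    rw [hxp, Submodule.mem_colon_singleton, Submodule.mem_bot]
  have hannq : ∀ a : A, a • xq = 0 ↔ a ∈ q := fun a => by
    rw [hxq, Submodule.mem_colon_singleton, Submodule.mem_bot]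
  have hinter : Submodule.span A {xp} ⊓ Submodule.span A {xq} = ⊥ := by
    rw [eq_bot_iff]
    rintro z hz
    obtain ⟨hz1, hz2⟩ := Submodule.mem_inf.mp hz
    by_contra hz0
    rw [Submodule.mem_bot] at hz0
    obtain ⟨a, rfl⟩ := Submodule.mem_span_singleton.mp hz1
    have hap : a ∉ p := fun h' => hz0 ((hannp a).mpr h')
    obtain ⟨b, hb⟩ := Submodule.mem_span_singleton.mp hz2
    have hbq : b ∉ q := fun h' => hz0 (by rw [← hb]; exact (hannq b).mpr h')
    apply hne
    ext c
    rw [← ann_smul_of_prime hq' hannq hbq c, hb, ann_smul_of_prime hp' hannp hap c]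
  have hpre : Submodule.comap N.mkQ (Submodule.span A {xp}) ⊓
      Submodule.comap N.mkQ (Submodule.span A {xq}) = N := by
    rw [← Submodule.comap_inf, hinter]
    simp [Submodule.ker_mkQ]
  rcases h.2 hpre with h1 | h1
  · obtain ⟨y, hy⟩ := Submodule.Quotient.mk_surjective N xp
    apply hxp0
    have hy' : y ∈ Submodule.comap N.mkQ (Submodule.span A {xp}) :=
      Submodule.mem_comap.mpr (by
        rw [Submodule.mkQ_apply, hy]; exact Submodule.mem_span_singleton_self _)
    rw [h1] at hy'
    rw [← hy, Submodule.Quotient.mk_eq_zero]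
    exact hy'
  · obtain ⟨y, hy⟩ := Submodule.Quotient.mk_surjective N xq
    apply hxq0
    have hy' : y ∈ Submodule.comap N.mkQ (Submodule.span A {xq}) :=
      Submodule.mem_comap.mpr (by
        rw [Submodule.mkQ_apply, hy]; exact Submodule.mem_span_singleton_self _)
    rw [h1] at hy'
    rw [← hy, Submodule.Quotient.mk_eq_zero]
    exact hy'

lemma exists_min_decomp [IsNoetherianRing A] [Module.Finite A M] :
    ∃ s : Finset (Submodule A M), sInf (↑s : Set (Submodule A M)) = ⊥ ∧
      (∀ N ∈ s, ∃ p, associatedPrimes A (M ⧸ N) = {p}) ∧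
      (∀ N ∈ s, sInf ((↑s : Set (Submodule A M)) \ {N}) ≠ ⊥) := by
  classical
  haveI := isNoetherian_of_isNoetherianRing_of_finite A M
  obtain ⟨s₀, hs₀, hirr⟩ := exists_infIrred_decomposition (⊥ : Submodule A M)
  have h0 : ∃ k : ℕ, ∃ s : Finset (Submodule A M),
      (sInf (↑s : Set (Submodule A M)) = ⊥ ∧
        ∀ N ∈ s, ∃ p, associatedPrimes A (M ⧸ N) = {p}) ∧ s.card = k :=
    ⟨s₀.card, s₀, ⟨by rw [← Finset.inf_id_eq_sInf, hs₀],
      fun N hN => singleton_ass_of_infIrred (hirr hN)⟩, rfl⟩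
  obtain ⟨s, ⟨hs1, hs2⟩, hcard⟩ := Nat.find_spec h0
  refine ⟨s, hs1, hs2, ?_⟩
  intro N hN hbot
  have hlt : (s.erase N).card < Nat.find h0 := by
    rw [← hcard]
    exact Finset.card_erase_lt_of_mem hN
  exact Nat.find_min h0 hlt ⟨s.erase N,
    ⟨by rw [Finset.coe_erase]; exact hbot,
      fun N' hN' => hs2 N' (Finset.mem_of_mem_erase hN')⟩, rfl⟩

end RMFPlain

section Graded
variable {A₀ A : Type} [CommRing A₀] [CommRing A] [Algebra A₀ A]
  {𝒜 : ℕ × ℕ → Submodule A₀ A} [GradedAlgebra 𝒜]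
  {M : Type} [AddCommGroup M] [Module A M] [Module A₀ M] [IsScalarTower A₀ A M]
  {ℳ : ℕ × ℕ → Submodule A₀ M} [DirectSum.Decomposition ℳ] [SetLike.GradedSMul 𝒜 ℳ]

lemma my_smul_mem {i j : ℕ × ℕ} {ai : A} {bj : M} (h1 : ai ∈ 𝒜 i) (h2 : bj ∈ ℳ j) :
    ai • bj ∈ ℳ (i + j) := SetLike.GradedSMul.smul_mem h1 h2

lemma decompose_sum_comp {κ : Type*} (s : Finset κ) (f : κ → M) (j : ℕ × ℕ) :
    (decompose ℳ (∑ i ∈ s, f i) j : M) = ∑ i ∈ s, (decompose ℳ (f i) j : M) := by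
  classical
  induction s using Finset.induction with
  | empty => simp
  | @insert _ _ h ih =>
    rw [Finset.sum_insert h, Finset.sum_insert h, ← ih, DirectSum.decompose_add,
      DirectSum.add_apply, Submodule.coe_add]

lemma comp_mem_of_sum {κ : Type*} (s : Finset κ) (z : κ → M) (deg : κ → ℕ × ℕ)
    (hz : ∀ j ∈ s, z j ∈ ℳ (deg j)) (N : Submodule A M) (hN : ∀ j ∈ s, z j ∈ N) (d : ℕ × ℕ) :
    (decompose ℳ (∑ j ∈ s, z j) d : M) ∈ N := by
  rw [decompose_sum_comp]
  refine Submodule.sum_mem _ fun j hj => ?_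
  by_cases h : deg j = d
  · subst h; rw [DirectSum.decompose_of_mem_same ℳ (hz j hj)]; exact hN j hj
  · rw [DirectSum.decompose_of_mem_ne ℳ (hz j hj) h]; exact N.zero_mem

lemma decompose_smul_right {x : M} {e : ℕ × ℕ} (hx : x ∈ ℳ e) (a : A) (d : ℕ × ℕ) :
    (decompose ℳ (a • x) (d + e) : M) = (decompose 𝒜 a d : A) • x := by
  classical
  conv_lhs => rw [← DirectSum.sum_support_decompose 𝒜 a, Finset.sum_smul, decompose_sum_comp]
  rw [Finset.sum_eq_single d]
  · exact DirectSum.decompose_of_mem_same ℳ (my_smul_mem (SetLike.coe_mem _) hx)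
  · intro b _ hbd
    exact DirectSum.decompose_of_mem_ne ℳ (my_smul_mem (SetLike.coe_mem _) hx)
      (fun h => hbd (by simpa using add_right_cancel h))
  · intro hd
    rw [DFinsupp.notMem_support_iff.mp hd]
    simp

lemma decompose_smul_left {a : A} {e : ℕ × ℕ} (ha : a ∈ 𝒜 e) (x : M) (d : ℕ × ℕ) :
    (decompose ℳ (a • x) (e + d) : M) = a • (decompose ℳ x d : M) := by
  classical
  conv_lhs => rw [← DirectSum.sum_support_decompose ℳ x, Finset.smul_sum, decompose_sum_comp]
  rw [Finset.sum_eq_single d]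
  · exact DirectSum.decompose_of_mem_same ℳ (my_smul_mem ha (SetLike.coe_mem _))
  · intro b _ hbd
    exact DirectSum.decompose_of_mem_ne ℳ (my_smul_mem ha (SetLike.coe_mem _))
      (fun h => hbd (by simpa using add_left_cancel h))
  · intro hd
    rw [DFinsupp.notMem_support_iff.mp hd]
    simp

lemma smul_comp_eq_zero {a : A} {e : ℕ × ℕ} (ha : a ∈ 𝒜 e) {x : M} (h : a • x = 0)
    (d : ℕ × ℕ) : a • (decompose ℳ x d : M) = 0 := by
  rw [← decompose_smul_left ha x d, h]
  simp

/-- A submodule closed under taking homogeneous components. -/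
def IsHomogSub (ℳ : ℕ × ℕ → Submodule A₀ M) [DirectSum.Decomposition ℳ]
    (N : Submodule A M) : Prop :=
  ∀ x ∈ N, ∀ d, (decompose ℳ x d : M) ∈ N

lemma comp_add_apply (m m' : M) (d : ℕ × ℕ) :
    (decompose ℳ (m + m') d : M) = (decompose ℳ m d : M) + (decompose ℳ m' d : M) := by
  rw [DirectSum.decompose_add, DirectSum.add_apply, Submodule.coe_add]

include 𝒜 in
lemma isHomogSub_sup_span {N : Submodule A M} (hN : IsHomogSub ℳ N) {x : M} {e : ℕ × ℕ}
    (hx : x ∈ ℳ e) : IsHomogSub ℳ (N ⊔ Submodule.span A {x}) := by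
  classical
  intro y hy d
  obtain ⟨n, hn, z, hz, rfl⟩ := Submodule.mem_sup.mp hy
  obtain ⟨a, rfl⟩ := Submodule.mem_span_singleton.mp hz
  rw [comp_add_apply]
  refine Submodule.add_mem _ (Submodule.mem_sup_left (hN n hn d))
    (Submodule.mem_sup_right (S := N) ?_)
  have hax : a • x = ∑ d' ∈ DFinsupp.support (decompose 𝒜 a), (decompose 𝒜 a d' : A) • x := by
    conv_lhs => rw [← DirectSum.sum_support_decompose 𝒜 a]
    rw [Finset.sum_smul]
  rw [hax]
  exact comp_mem_of_sum _ _ (fun d' => d' + e)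
    (fun j _ => my_smul_mem (SetLike.coe_mem _) hx) _
    (fun j _ => Submodule.smul_mem _ _ (Submodule.mem_span_singleton_self x)) d

include 𝒜 in
lemma isHomogSub_span_single {x : M} {e : ℕ × ℕ} (hx : x ∈ ℳ e) :
    IsHomogSub ℳ (Submodule.span A {x}) := by
  have h : IsHomogSub ℳ ((⊥ : Submodule A M) ⊔ Submodule.span A {x}) :=
    isHomogSub_sup_span (𝒜 := 𝒜) (fun z hz d => by
      rw [Submodule.mem_bot] at hz; subst hz; simp) hx
  rwa [bot_sup_eq] at h

lemma exists_comp_not_mem {N : Submodule A M} (hN : N ≠ ⊤) :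
    ∃ (x : M) (e : ℕ × ℕ), x ∈ ℳ e ∧ x ∉ N := by
  classical
  obtain ⟨m, hm⟩ : ∃ m, m ∉ N := by
    by_contra h; push_neg at h; exact hN (eq_top_iff.2 fun z _ => h z)
  by_contra h; push_neg at h
  apply hm
  rw [← DirectSum.sum_support_decompose ℳ m]
  exact Submodule.sum_mem _ fun d _ => h _ d (SetLike.coe_mem _)

/-- Key step: a maximal colon ideal into a homogeneous submodule is a homogeneous prime. -/
theorem exists_homog_prime_colon [IsNoetherianRing A] {F : Submodule A M}
    (hF : IsHomogSub ℳ F) (hFt : F ≠ ⊤) :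
    ∃ (x : M) (e : ℕ × ℕ), x ∈ ℳ e ∧ x ∉ F ∧
      Ideal.IsHomogeneous 𝒜 (Submodule.comap (LinearMap.toSpanSingleton A M x) F) ∧
      Ideal.IsPrime (Submodule.comap (LinearMap.toSpanSingleton A M x) F) := by
  classical
  set S : Set (Ideal A) :=
    {I | ∃ (x : M) (e : ℕ × ℕ), x ∈ ℳ e ∧ x ∉ F ∧
      I = Submodule.comap (LinearMap.toSpanSingleton A M x) F} with hS
  have hSne : S.Nonempty := by
    obtain ⟨x, e, hxe, hxF⟩ := exists_comp_not_mem (ℳ := ℳ) hFt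
    exact ⟨_, x, e, hxe, hxF, rfl⟩
  obtain ⟨q, hqS, hqmax⟩ := (set_has_maximal_iff_noetherian.mpr inferInstance) S hSne
  obtain ⟨x, e, hxe, hxF, rfl⟩ := hqS
  have hmemq : ∀ a : A, a ∈ Submodule.comap (LinearMap.toSpanSingleton A M x) F ↔ a • x ∈ F :=
    fun a => by rw [Submodule.mem_comap, LinearMap.toSpanSingleton_apply]
  have hhom : Ideal.IsHomogeneous 𝒜 (Submodule.comap (LinearMap.toSpanSingleton A M x) F) := by
    intro d a ha
    rw [hmemq] at ha ⊢
    rw [← decompose_smul_right hxe a d]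
    exact hF _ ha _
  have hne : Submodule.comap (LinearMap.toSpanSingleton A M x) F ≠ ⊤ := by
    intro h
    exact hxF (by simpa using (hmemq 1).mp (h ▸ Submodule.mem_top))
  refine ⟨x, e, hxe, hxF, hhom, ?_⟩
  letI : GradedRing (fun i : ℕ ×ₗ ℕ => 𝒜 (ofLex i)) := inferInstanceAs (GradedRing 𝒜)
  have hhomL : Ideal.IsHomogeneous (fun i : ℕ ×ₗ ℕ => 𝒜 (ofLex i))
      (Submodule.comap (LinearMap.toSpanSingleton A M x) F) := by
    intro j a ha
    exact hhom (ofLex j) ha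
  refine Ideal.IsHomogeneous.isPrime_of_homogeneous_mem_or_mem
    (𝒜 := fun i : ℕ ×ₗ ℕ => 𝒜 (ofLex i)) hhomL hne ?_
  rintro a b ⟨ea, hea⟩ ⟨eb, heb⟩ hab
  by_cases hb : b ∈ Submodule.comap (LinearMap.toSpanSingleton A M x) F
  · exact Or.inr hb
  left
  have hbx : (b • x) ∉ F := fun h => hb ((hmemq b).mpr h)
  have hle : Submodule.comap (LinearMap.toSpanSingleton A M x) F ≤
      Submodule.comap (LinearMap.toSpanSingleton A M (b • x)) F := by
    intro c hc
    rw [hmemq] at hc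
    rw [Submodule.mem_comap, LinearMap.toSpanSingleton_apply, smul_comm]
    exact F.smul_mem b hc
  have heq : Submodule.comap (LinearMap.toSpanSingleton A M (b • x)) F =
      Submodule.comap (LinearMap.toSpanSingleton A M x) F := by
    by_contra hne'
    exact hqmax _ ⟨b • x, ofLex eb + e, my_smul_mem heb hxe, hbx, rfl⟩
      (lt_of_le_of_ne hle (Ne.symm hne'))
  rw [hmemq]
  have : (a * b) • x ∈ F := (hmemq _).mp hab
  rw [mul_smul] at this
  have : a ∈ Submodule.comap (LinearMap.toSpanSingleton A M (b • x)) F := by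
    rw [Submodule.mem_comap, LinearMap.toSpanSingleton_apply]; exact this
  rw [heq, hmemq] at this
  exact this

include 𝒜 in
/-- A homogeneous associated prime is the annihilator of a homogeneous element. -/
lemma exists_homog_witness {q : Ideal A} (hq : q.IsPrime) (hhom : q.IsHomogeneous 𝒜)
    {x : M} (hx : ∀ a : A, a • x = 0 ↔ a ∈ q) :
    ∃ (y : M) (e : ℕ × ℕ), y ∈ ℳ e ∧ y ≠ 0 ∧ ∀ a : A, a • y = 0 ↔ a ∈ q := by
  classical
  set s := DFinsupp.support (decompose ℳ x) with hs
  have hqle : ∀ (d : ℕ × ℕ) (a : A), a ∈ q → a • (decompose ℳ x d : M) = 0 := by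
    intro d a ha
    have hxa : a • (decompose ℳ x d : M) =
        ∑ e' ∈ DFinsupp.support (decompose 𝒜 a),
          (decompose 𝒜 a e' : A) • (decompose ℳ x d : M) := by
      conv_lhs => rw [← DirectSum.sum_support_decompose 𝒜 a]
      rw [Finset.sum_smul]
    rw [hxa]
    refine Finset.sum_eq_zero fun e' _ => ?_
    exact smul_comp_eq_zero (SetLike.coe_mem _) ((hx _).mpr (hhom e' ha)) d
  have hex : ∃ d, ∀ a : A, a • (decompose ℳ x d : M) = 0 → a ∈ q := by
    by_contra hcon
    push_neg at hcon
    choose c hc1 hc2 using hcon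
    have hprod : (∏ d ∈ s, c d) • x = 0 := by
      have hxs : x = ∑ d ∈ s, (decompose ℳ x d : M) :=
        (DirectSum.sum_support_decompose ℳ x).symm
      rw [hxs, Finset.smul_sum]
      refine Finset.sum_eq_zero fun d hd => ?_
      rw [← Finset.mul_prod_erase s c hd, mul_comm, mul_smul, hc1 d]
      simp
    have hmem : (∏ d ∈ s, c d) ∈ q := (hx _).mp hprod
    haveI := hq
    obtain ⟨d, _, hdq⟩ := Ideal.IsPrime.prod_mem_iff.mp hmem
    exact hc2 d hdq
  obtain ⟨d, hd⟩ := hex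
  refine ⟨decompose ℳ x d, d, SetLike.coe_mem _, ?_, fun a => ⟨hd a, hqle d a⟩⟩
  intro h0
  exact hq.ne_top ((Ideal.eq_top_iff_one q).mpr (hd 1 (by rw [h0, smul_zero])))


include 𝒜 in
theorem filtration_from [IsNoetherianRing A] [Module.Finite A M] :
    ∀ (F₀ : Submodule A M), IsHomogSub ℳ F₀ →
    ∃ (n : ℕ) (G : ℕ → Submodule A M) (pp : ℕ → Ideal A),
      G 0 = F₀ ∧ G n = ⊤ ∧ (∀ i, i < n → G i < G (i + 1)) ∧
      (∀ i, i < n → (pp (i + 1)).IsPrime ∧ (pp (i + 1)).IsHomogeneous 𝒜 ∧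
        Nonempty ((↥(G (i + 1)) ⧸ Submodule.comap (G (i + 1)).subtype (G i)) ≃ₗ[A]
          (A ⧸ pp (i + 1)))) ∧
      (∀ i, F₀ ≤ G i) := by
  haveI := isNoetherian_of_isNoetherianRing_of_finite A M
  have wf : WellFounded ((· > ·) : Submodule A M → Submodule A M → Prop) :=
    IsWellFounded.wf
  intro F₀
  induction F₀ using WellFounded.induction wf with
  | _ F₀ ih => ?_
  intro hhom
  by_cases hF : F₀ = ⊤
  · exact ⟨0, fun _ => F₀, fun _ => ⊥, rfl, hF, fun i hi => absurd hi (by omega),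
      fun i hi => absurd hi (by omega), fun i => le_rfl⟩
  · obtain ⟨x, e, hxe, hxF, hqhom, hqprime⟩ := exists_homog_prime_colon (𝒜 := 𝒜) hhom hF
    have hlt : F₀ < F₀ ⊔ Submodule.span A {x} := by
      refine lt_of_le_of_ne le_sup_left fun h => hxF ?_
      rw [h]
      exact Submodule.mem_sup_right (Submodule.mem_span_singleton_self x)
    obtain ⟨n, G, pp, hG0, hGn, hchain, hprimes, hle⟩ :=
      ih (F₀ ⊔ Submodule.span A {x}) hlt (isHomogSub_sup_span (𝒜 := 𝒜) hhom hxe)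
    refine ⟨n + 1, fun i => match i with | 0 => F₀ | j+1 => G j,
      fun i => match i with
        | 0 => ⊥
        | 1 => Submodule.comap (LinearMap.toSpanSingleton A M x) F₀
        | (j+2) => pp (j+1), rfl, hGn, ?_, ?_, ?_⟩
    · intro i hi
      match i with
      | 0 =>
        show F₀ < G 0
        rw [hG0]
        exact hlt
      | j+1 => exact hchain j (by omega)
    · intro i hi
      match i with
      | 0 =>
        refine ⟨hqprime, hqhom, ?_⟩
        show Nonempty ((↥(G 0) ⧸ Submodule.comap (G 0).subtype F₀) ≃ₗ[A]
          (A ⧸ Submodule.comap (LinearMap.toSpanSingleton A M x) F₀))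
        rw [hG0]
        exact quot_sup_span_equiv F₀ x
      | j+1 => exact hprimes j (by omega)
    · intro i
      match i with
      | 0 => exact le_rfl
      | j+1 =>
        show F₀ ≤ G j
        exact le_trans le_sup_left (hle j)

end Graded
section RMFRel
variable {A₀ A : Type} [CommRing A₀] [CommRing A] [Algebra A₀ A]
  {𝒜 : ℕ × ℕ → Submodule A₀ A} [GradedAlgebra 𝒜]

include 𝒜 in
theorem isRelevant_of [IsNoetherianRing A] (M' : Type) [AddCommGroup M'] [Module A M']
    [Module.Finite A M'] {q : Ideal A} (hq : q.IsPrime) (hqhom : q.IsHomogeneous 𝒜)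
    (hqrel : ¬ biPlus 𝒜 ≤ q) (x : M') (hx0 : x ≠ 0) (hann : ∀ a : A, a • x = 0 ↔ a ∈ q) :
    IsRelevantModule 𝒜 M' := by
  classical
  obtain ⟨s, hs1, hs2, hs3⟩ := exists_min_decomp (A := A) (M := M')
  set P : Submodule A M' → Ideal A := fun N =>
    if h : ∃ p, associatedPrimes A (M' ⧸ N) = {p} then h.choose else ⊥ with hP
  have hPass : ∀ N ∈ s, associatedPrimes A (M' ⧸ N) = {P N} := by
    intro N hN
    have h := hs2 N hN
    simp only [hP, dif_pos h]
    exact h.choose_spec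
  obtain ⟨N, hNs, hqN⟩ := assoc_of_sInf_inf_span hq s x hx0 hann (by rw [hs1, bot_inf_eq])
  have hqP : q = P N := Set.mem_singleton_iff.mp (by rw [← hPass N hNs]; exact hqN)
  exact ⟨s, P, hs1, hPass, hs3, N, hNs, hqP ▸ hqhom, hqP ▸ hqrel⟩

end RMFRel

/-- A relevant finitely generated bigraded module `M` admits a prime
filtration `0 = M₀ ⊂ M₁ ⊂ … ⊂ Mₙ = M` with `Mᵢ/Mᵢ₋₁ ≅ A/pᵢ` for bihomogeneous primes
`pᵢ`, such that `p₁` is relevant; moreover each `Mᵢ` (for `i ≥ 1`) is relevant. -/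
theorem relevant_module_filtration (A₀ A : Type) [CommRing A₀] [IsArtinianRing A₀]
    [IsLocalRing A₀] [CommRing A] [IsNoetherianRing A] [Algebra A₀ A]
    (𝒜 : ℕ × ℕ → Submodule A₀ A) [GradedAlgebra 𝒜]
    (hstd : Algebra.adjoin A₀ ((𝒜 (1, 0) : Set A) ∪ (𝒜 (0, 1) : Set A)) = ⊤)
    (M : Type) [AddCommGroup M] [Module A M] [Module A₀ M] [IsScalarTower A₀ A M]
    [Module.Finite A M]
    (ℳ : ℕ × ℕ → Submodule A₀ M) [DirectSum.Decomposition ℳ] [SetLike.GradedSMul 𝒜 ℳ]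
    (hrel : IsRelevantModule 𝒜 M) :
    ∃ (n : ℕ) (F : ℕ → Submodule A M) (p : ℕ → Ideal A),
      F 0 = ⊥ ∧ F n = ⊤ ∧
      (∀ i, i < n → F i < F (i + 1)) ∧
      (∀ i, i < n → (p (i + 1)).IsPrime ∧ (p (i + 1)).IsHomogeneous 𝒜 ∧
        Nonempty ((↥(F (i + 1)) ⧸ Submodule.comap (F (i + 1)).subtype (F i)) ≃ₗ[A]
          (A ⧸ p (i + 1)))) ∧
      (0 < n → ¬ biPlus 𝒜 ≤ p 1) ∧
      (∀ i, 1 ≤ i → i ≤ n → IsRelevantModule 𝒜 (F i)) := by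
  classical
  haveI := isNoetherian_of_isNoetherianRing_of_finite A M
  -- Step 1: extract a relevant homogeneous associated prime with an explicit witness.
  obtain ⟨s, P, hsInf, hAss, hirr, N₀, hN₀s, hPhom, hPrel⟩ := hrel
  have hN₀s' : N₀ ∈ (↑s : Set (Submodule A M)) := hN₀s
  have hins : insert N₀ ((↑s : Set (Submodule A M)) \ {N₀}) = (↑s : Set (Submodule A M)) := by
    rw [Set.insert_diff_singleton, Set.insert_eq_self.mpr hN₀s']
  have hKN : sInf ((↑s : Set (Submodule A M)) \ {N₀}) ⊓ N₀ = ⊥ := by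
    rw [inf_comm, ← sInf_insert, hins, hsInf]
  obtain ⟨z0, hz0K, hz0⟩ := (Submodule.ne_bot_iff _).mp (hirr N₀ hN₀s)
  haveI : Module.Finite A ↥(Submodule.span A {z0}) :=
    Module.Finite.iff_fg.mpr (Submodule.fg_span_singleton z0)
  haveI : Nontrivial ↥(Submodule.span A {z0}) :=
    ⟨⟨⟨z0, Submodule.mem_span_singleton_self z0⟩, 0, by simp [Subtype.ext_iff, hz0]⟩⟩
  obtain ⟨q, hqassoc⟩ := associatedPrimes.nonempty A ↥(Submodule.span A {z0})
  obtain ⟨hqprime, w, hw⟩ := (isAssociatedPrime_iff).mp hqassoc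
  have hannw : ∀ a : A, a • (w : M) = 0 ↔ a ∈ q := by
    intro a
    rw [hw, Submodule.mem_colon_singleton, Submodule.mem_bot]
    exact ⟨fun h => Subtype.ext h, fun h => congrArg Subtype.val h⟩
  have hw0 : (w : M) ≠ 0 := by
    intro h0
    exact hqprime.ne_top ((Ideal.eq_top_iff_one q).mpr ((hannw 1).mp (by rw [one_smul, h0])))
  have hwK : (w : M) ∈ sInf ((↑s : Set (Submodule A M)) \ {N₀}) := by
    have h' : Submodule.span A {z0} ≤ sInf ((↑s : Set (Submodule A M)) \ {N₀}) :=
      (Submodule.span_singleton_le_iff_mem _ _).mpr hz0K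
    exact h' w.2
  have hqassoc' : IsAssociatedPrime q (M ⧸ N₀) := by
    refine ⟨hqprime, Submodule.Quotient.mk (w : M), ?_⟩
    suffices hcol : q = (⊥ : Submodule A (M ⧸ N₀)).colon {Submodule.Quotient.mk (w : M)} by
      rw [← hcol, hqprime.radical]
    ext a
    rw [Submodule.mem_colon_singleton, Submodule.mem_bot, ← Submodule.Quotient.mk_smul,
      Submodule.Quotient.mk_eq_zero]
    constructor
    · intro ha
      rw [(hannw a).mpr ha]
      exact N₀.zero_mem
    · intro haN
      rw [← hannw]
      have h1 : a • (w : M) ∈ sInf ((↑s : Set (Submodule A M)) \ {N₀}) :=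
        Submodule.smul_mem _ a hwK
      have h2 : a • (w : M) ∈ sInf ((↑s : Set (Submodule A M)) \ {N₀}) ⊓ N₀ :=
        Submodule.mem_inf.mpr ⟨h1, haN⟩
      rw [hKN] at h2
      simpa using h2
  have hqP : q = P N₀ := Set.mem_singleton_iff.mp (by rw [← hAss N₀ hN₀s]; exact hqassoc')
  have hqhom : q.IsHomogeneous 𝒜 := hqP ▸ hPhom
  have hqrel : ¬ biPlus 𝒜 ≤ q := hqP ▸ hPrel
  obtain ⟨y, e, hye, hy0, hanny⟩ :=
    exists_homog_witness (𝒜 := 𝒜) (ℳ := ℳ) hqprime hqhom hannw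
  obtain ⟨n, G, pp, hG0, hGn, hchain, hprimes, hle⟩ :=
    filtration_from (𝒜 := 𝒜) (ℳ := ℳ) (Submodule.span A {y})
      (isHomogSub_span_single (𝒜 := 𝒜) hye)
  refine ⟨n + 1, fun i => match i with | 0 => ⊥ | j+1 => G j,
    fun i => match i with | 0 => ⊥ | 1 => q | j+2 => pp (j+1), rfl, hGn, ?_, ?_, ?_, ?_⟩
  · intro i hi
    match i with
    | 0 =>
      show ⊥ < G 0
      rw [hG0, bot_lt_iff_ne_bot]
      exact fun h => hy0 (Submodule.span_singleton_eq_bot.mp h)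
    | j+1 => exact hchain j (by omega)
  · intro i hi
    match i with
    | 0 =>
      refine ⟨hqprime, hqhom, ?_⟩
      have e2 : Submodule.comap (LinearMap.toSpanSingleton A M y) (⊥ : Submodule A M) = q := by
        ext a
        rw [Submodule.mem_comap, LinearMap.toSpanSingleton_apply, Submodule.mem_bot]
        exact hanny a
      have hiso := quot_sup_span_equiv (⊥ : Submodule A M) y
      rw [bot_sup_eq, e2] at hiso
      show Nonempty ((↥(G 0) ⧸ Submodule.comap (G 0).subtype (⊥ : Submodule A M)) ≃ₗ[A]
        (A ⧸ q))
      rw [hG0]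
      exact hiso
    | j+1 => exact hprimes j (by omega)
  · intro _
    exact hqrel
  · intro i h1 h2
    match i with
    | 0 => exact absurd h1 (by omega)
    | j+1 =>
      show IsRelevantModule 𝒜 ↥(G j)
      haveI : Module.Finite A ↥(G j) := Module.Finite.iff_fg.mpr (IsNoetherian.noetherian (G j))
      have hyG : y ∈ G j := hle j (Submodule.mem_span_singleton_self y)
      refine isRelevant_of (𝒜 := 𝒜) ↥(G j) hqprime hqhom hqrel ⟨y, hyG⟩ ?_ ?_
      · intro h
        exact hy0 (by simpa [Subtype.ext_iff] using h)
      · intro a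
        rw [← hanny a]
        exact ⟨fun h => congrArg Subtype.val h, fun h => Subtype.ext h⟩
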